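/- Let r > 1 be even and let Z : 𝒫(ℤ²) → 𝕋^r be a simple, SL_2(ℤ) equivariant, translation invariant valuation. If Z([0,1]²) = 0, then Z(T_2) = 0, where T_2 = conv{0, e_1, e_2}. -/
import Mathlib


open scoped Pointwise
open MeasureTheory

noncomputable section

/-- Points of `ℝⁿ`. -/
abbrev Vec (n : ℕ) := Fin n → ℝ

/-- A lattice polytope in `ℝⁿ`: the convex hull of finitely many points of `ℤⁿ`. -/
def IsLatticePolytope (n : ℕ) (P : Set (Vec n)) : Prop :=
  ∃ S : Finset (Vec n),
    (∀ x ∈ S, ∀ i, ∃ m : ℤ, x i = (m : ℝ)) ∧ P = convexHull ℝ (S : Set (Vec n))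

/-- The space `𝕋^r` of symmetric tensors of rank `r` on `ℝⁿ`, identified with
symmetric `r`-linear functionals on `(ℝⁿ)^r`. -/
def SymTensorSpace (n r : ℕ) :
    Submodule ℝ (MultilinearMap ℝ (fun _ : Fin r => Vec n) ℝ) where
  carrier := {A | ∀ (σ : Equiv.Perm (Fin r)) (v : Fin r → Vec n), A (v ∘ σ) = A v}
  add_mem' := by
    intro a b ha hb σ v
    simp [ha σ v, hb σ v]
  zero_mem' := by
    intro σ v
    simp
  smul_mem' := by
    intro c a ha σ v
    simp [ha σ v]

abbrev SymTensor (n r : ℕ) : Type := ↥(SymTensorSpace n r)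

/-- The linear functional `v ↦ x · v` on `ℝⁿ`. -/
def dotLin (n : ℕ) (x : Vec n) : Vec n →ₗ[ℝ] ℝ where
  toFun v := ∑ i, x i * v i
  map_add' a b := by
    simp [mul_add, Finset.sum_add_distrib]
  map_smul' c a := by
    simp only [Pi.smul_apply, smul_eq_mul, RingHom.id_apply, Finset.mul_sum]
    exact Finset.sum_congr rfl fun i _ => by ring

/-- `x^r`, the `r`-fold symmetric tensor power of `x ∈ ℝⁿ`:
`x^r(v₁,…,v_r) = (x·v₁)⋯(x·v_r)`. -/
def xpow (n : ℕ) (x : Vec n) (r : ℕ) : SymTensor n r :=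
  ⟨(MultilinearMap.mkPiAlgebra ℝ (Fin r) ℝ).compLinearMap fun _ => dotLin n x, by
    intro σ v
    simp only [MultilinearMap.compLinearMap_apply, MultilinearMap.mkPiAlgebra_apply,
      Function.comp_apply]
    exact Equiv.prod_comp σ fun k => dotLin n x (v k)⟩

/-- The lattice points lying in `P`. -/
def latticePoints (n : ℕ) (P : Set (Vec n)) : Set (Fin n → ℤ) :=
  {z | (fun i => (z i : ℝ)) ∈ P}

/-- The discrete moment tensor `L^r(P) = (1/r!) ∑_{x ∈ P ∩ ℤⁿ} x^r`. -/
def discMoment (n r : ℕ) (P : Set (Vec n)) : SymTensor n r :=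
  ((r.factorial : ℝ))⁻¹ • ∑ᶠ z ∈ latticePoints n P, xpow n (fun i => (z i : ℝ)) r

/-- The discrete moment vector `L^1(P) = ∑_{x ∈ P ∩ ℤⁿ} x`. -/
def discMomentVec (n : ℕ) (P : Set (Vec n)) : Vec n :=
  ∑ᶠ z ∈ latticePoints n P, fun i => (z i : ℝ)

/-- Translation of a set by an integer vector. -/
def latTranslate (n : ℕ) (y : Fin n → ℤ) (P : Set (Vec n)) : Set (Vec n) :=
  (fun x => x + fun i => (y i : ℝ)) '' P

/-- The action of `φ ∈ SL_n(ℤ)` on `ℝⁿ`. -/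
def slAct (n : ℕ) (φ : Matrix.SpecialLinearGroup (Fin n) ℤ) (x : Vec n) : Vec n :=
  ((φ : Matrix (Fin n) (Fin n) ℤ).map fun a => (a : ℝ)).mulVec x

/-- The action of the transpose `φᵗ` of `φ ∈ SL_n(ℤ)` on `ℝⁿ`. -/
def slActT (n : ℕ) (φ : Matrix.SpecialLinearGroup (Fin n) ℤ) (x : Vec n) : Vec n :=
  (((φ : Matrix (Fin n) (Fin n) ℤ).map fun a => (a : ℝ)).transpose).mulVec x

/-- A valuation on lattice polytopes in `ℝⁿ`. -/
def IsValuation (n : ℕ) {M : Type*} [AddCommMonoid M] (Z : Set (Vec n) → M) : Prop :=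
  Z ∅ = 0 ∧
    ∀ P Q : Set (Vec n), IsLatticePolytope n P → IsLatticePolytope n Q →
      IsLatticePolytope n (P ∪ Q) → IsLatticePolytope n (P ∩ Q) →
      Z P + Z Q = Z (P ∪ Q) + Z (P ∩ Q)

/-- `SL_n(ℤ)` equivariance: `Z(φP)(v₁,…,v_r) = Z(P)(φᵗv₁,…,φᵗv_r)`. -/
def SLEquivariant (n r : ℕ) (Z : Set (Vec n) → SymTensor n r) : Prop :=
  ∀ (φ : Matrix.SpecialLinearGroup (Fin n) ℤ) (P : Set (Vec n)),
    IsLatticePolytope n P → ∀ v : Fin r → Vec n,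
      (Z (slAct n φ '' P)).1 v = (Z P).1 fun k => slActT n φ (v k)

/-- Translation invariance. -/
def TranslationInvariant (n : ℕ) {M : Type*} (Z : Set (Vec n) → M) : Prop :=
  ∀ (y : Fin n → ℤ) (P : Set (Vec n)), IsLatticePolytope n P → Z (latTranslate n y P) = Z P

/-- Homogeneity of degree `i`: `Z(kP) = k^i Z(P)` for all `k ∈ ℕ`. -/
def Homog (n : ℕ) {M : Type*} [AddCommMonoid M] (i : ℕ) (Z : Set (Vec n) → M) : Prop :=
  ∀ (k : ℕ) (P : Set (Vec n)), IsLatticePolytope n P → Z ((k : ℝ) • P) = k ^ i • Z P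

/-- `W` is a family of associated functions satisfying the translation covariance
expansion at rank `s`:  `W^s(P+y) = ∑_{j=0}^{s} W^{s-j}(P) y^j / j!`.
Since all tensors involved are symmetric, this identity of symmetric tensor
products is stated equivalently on the diagonal, where
`(A ⊙ y^j)(v,…,v) = A(v,…,v)·(y·v)^j`. -/
def CovariantAt (n s : ℕ) (W : (j : ℕ) → Set (Vec n) → SymTensor n j) : Prop :=
  ∀ (y : Fin n → ℤ) (P : Set (Vec n)), IsLatticePolytope n P → ∀ v : Vec n,
    (W s (latTranslate n y P)).1 (fun _ => v) =
      ∑ j ∈ Finset.range (s + 1),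
        ((j.factorial : ℝ))⁻¹ * ((W (s - j) P).1 fun _ => v) * (∑ i, (y i : ℝ) * v i) ^ j

/-- Translation covariance: there exist associated functions `Z^j : 𝒫(ℤⁿ) → 𝕋^j`,
`j = 0,…,r`, with `Z^r = Z`, such that `Z(P+y) = ∑_{j=0}^r Z^{r-j}(P) y^j / j!`. -/
def TranslationCovariant (n r : ℕ) (Z : Set (Vec n) → SymTensor n r) : Prop :=
  ∃ W : (j : ℕ) → Set (Vec n) → SymTensor n j, W r = Z ∧ CovariantAt n r W

/-- The dimension of (the affine hull of) `P`. -/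
def pdim (n : ℕ) (P : Set (Vec n)) : ℕ :=
  Module.finrank ℝ (affineSpan ℝ P).direction

/-- `L` is a family of Ehrhart tensors of rank `r`:
`L^r(kP) = ∑_{i=1}^{n+r} L_i^r(P) k^i` for all `k ∈ ℕ` and all lattice polytopes `P`. -/
def IsEhrhartFamily (n r : ℕ) (L : ℕ → Set (Vec n) → SymTensor n r) : Prop :=
  ∀ P : Set (Vec n), IsLatticePolytope n P → ∀ k : ℕ,
    discMoment n r ((k : ℝ) • P) = ∑ i ∈ Finset.Icc 1 (n + r), (k : ℝ) ^ i • L i P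

/-- The standard basis vector `e_i` of `ℝⁿ`. -/
def stdVec (n : ℕ) (i : Fin n) : Vec n := Pi.single i 1

/-! ### Auxiliary lemmas -/

private lemma memHullCombo {k : ℕ} {s : Set (Vec 2)} {z : Fin k → Vec 2} (hz : ∀ i, z i ∈ s)
    {w : Fin k → ℝ} (hw : ∀ i, 0 ≤ w i) (h1 : ∑ i, w i = 1) :
    (∑ i, w i • z i) ∈ convexHull ℝ s := by
  have h := Finset.centerMass_mem_convexHull (Finset.univ : Finset (Fin k)) (w := w) (z := z)
    (fun i _ => hw i) (by rw [h1]; exact one_pos) (fun i _ => hz i)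
  rwa [Finset.centerMass, h1, inv_one, one_smul] at h

private lemma hullT : convexHull ℝ ({0, ![1, 0], ![0, 1]} : Set (Vec 2)) =
    {x : Vec 2 | 0 ≤ x 0 ∧ 0 ≤ x 1 ∧ x 0 + x 1 ≤ 1} := by
  apply Set.Subset.antisymm
  · apply convexHull_min
    · intro x hx
      simp only [Set.mem_insert_iff, Set.mem_singleton_iff] at hx
      rcases hx with rfl | rfl | rfl <;> refine ⟨?_, ?_, ?_⟩ <;> norm_num
    · rintro x ⟨hx0, hx1, hx2⟩ y ⟨hy0, hy1, hy2⟩ a b ha hb hab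
      refine ⟨?_, ?_, ?_⟩ <;>
        simp only [Pi.add_apply, Pi.smul_apply, smul_eq_mul] <;> nlinarith
  · rintro x ⟨h0, h1, h2⟩
    have hx : x = ∑ i, (![1 - x 0 - x 1, x 0, x 1] i) • (![0, ![1, 0], ![0, 1]] i) := by
      funext j
      fin_cases j <;> simp [Fin.sum_univ_three, Matrix.vecHead, Matrix.vecTail] <;> try ring
    rw [hx]
    apply memHullCombo
    · intro i; fin_cases i <;> simp
    · intro i; fin_cases i <;> simp <;> linarith
    · simp [Fin.sum_univ_three]
      try ring

private lemma hullT' : convexHull ℝ ({![1, 0], ![0, 1], ![1, 1]} : Set (Vec 2)) =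
    {x : Vec 2 | x 0 ≤ 1 ∧ x 1 ≤ 1 ∧ 1 ≤ x 0 + x 1} := by
  apply Set.Subset.antisymm
  · apply convexHull_min
    · intro x hx
      simp only [Set.mem_insert_iff, Set.mem_singleton_iff] at hx
      rcases hx with rfl | rfl | rfl <;> refine ⟨?_, ?_, ?_⟩ <;> norm_num
    · rintro x ⟨hx0, hx1, hx2⟩ y ⟨hy0, hy1, hy2⟩ a b ha hb hab
      refine ⟨?_, ?_, ?_⟩ <;>
        simp only [Pi.add_apply, Pi.smul_apply, smul_eq_mul] <;> nlinarith
  · rintro x ⟨h0, h1, h2⟩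
    have hx : x = ∑ i, (![1 - x 1, 1 - x 0, x 0 + x 1 - 1] i) •
        (![![1, 0], ![0, 1], ![1, 1]] i) := by
      funext j
      fin_cases j <;> simp [Fin.sum_univ_three, Matrix.vecHead, Matrix.vecTail] <;> try ring
    rw [hx]
    apply memHullCombo
    · intro i; fin_cases i <;> simp
    · intro i; fin_cases i <;> simp <;> linarith
    · simp [Fin.sum_univ_three]
      try ring

private lemma hullS : convexHull ℝ ({0, ![1, 0], ![0, 1], ![1, 1]} : Set (Vec 2)) =
    {x : Vec 2 | 0 ≤ x 0 ∧ x 0 ≤ 1 ∧ 0 ≤ x 1 ∧ x 1 ≤ 1} := by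
  apply Set.Subset.antisymm
  · apply convexHull_min
    · intro x hx
      simp only [Set.mem_insert_iff, Set.mem_singleton_iff] at hx
      rcases hx with rfl | rfl | rfl | rfl <;> refine ⟨?_, ?_, ?_, ?_⟩ <;> norm_num
    · rintro x ⟨hx0, hx1, hx2, hx3⟩ y ⟨hy0, hy1, hy2, hy3⟩ a b ha hb hab
      refine ⟨?_, ?_, ?_, ?_⟩ <;>
        simp only [Pi.add_apply, Pi.smul_apply, smul_eq_mul] <;> nlinarith
  · rintro x ⟨h0, h1, h2, h3⟩
    have hx : x = ∑ i, (![(1 - x 0) * (1 - x 1), x 0 * (1 - x 1), (1 - x 0) * x 1,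
        x 0 * x 1] i) • (![0, ![1, 0], ![0, 1], ![1, 1]] i) := by
      funext j
      fin_cases j <;> simp [Fin.sum_univ_four, Matrix.vecHead, Matrix.vecTail] <;> try ring
    rw [hx]
    apply memHullCombo
    · intro i; fin_cases i <;> simp
    · intro i; fin_cases i <;> simp <;> nlinarith
    · simp [Fin.sum_univ_four]
      try ring

private lemma hullD : convexHull ℝ ({![1, 0], ![0, 1]} : Set (Vec 2)) =
    {x : Vec 2 | 0 ≤ x 0 ∧ 0 ≤ x 1 ∧ x 0 + x 1 = 1} := by
  apply Set.Subset.antisymm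
  · apply convexHull_min
    · intro x hx
      simp only [Set.mem_insert_iff, Set.mem_singleton_iff] at hx
      rcases hx with rfl | rfl <;> refine ⟨?_, ?_, ?_⟩ <;> norm_num
    · rintro x ⟨hx0, hx1, hx2⟩ y ⟨hy0, hy1, hy2⟩ a b ha hb hab
      refine ⟨?_, ?_, ?_⟩ <;>
        simp only [Pi.add_apply, Pi.smul_apply, smul_eq_mul] <;> nlinarith
  · rintro x ⟨h0, h1, h2⟩
    have hx : x = ∑ i, (![1 - x 1, x 1] i) • (![![1, 0], ![0, 1]] i) := by
      funext j
      fin_cases j <;> simp [Fin.sum_univ_two, Matrix.vecHead, Matrix.vecTail] <;> try linarith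
    rw [hx]
    apply memHullCombo
    · intro i; fin_cases i <;> simp
    · intro i; fin_cases i <;> simp <;> linarith
    · simp [Fin.sum_univ_two]
      try ring

private lemma hullN : convexHull ℝ ({0, ![-1, 0], ![0, -1]} : Set (Vec 2)) =
    {x : Vec 2 | x 0 ≤ 0 ∧ x 1 ≤ 0 ∧ -1 ≤ x 0 + x 1} := by
  apply Set.Subset.antisymm
  · apply convexHull_min
    · intro x hx
      simp only [Set.mem_insert_iff, Set.mem_singleton_iff] at hx
      rcases hx with rfl | rfl | rfl <;> refine ⟨?_, ?_, ?_⟩ <;> norm_num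
    · rintro x ⟨hx0, hx1, hx2⟩ y ⟨hy0, hy1, hy2⟩ a b ha hb hab
      refine ⟨?_, ?_, ?_⟩ <;>
        simp only [Pi.add_apply, Pi.smul_apply, smul_eq_mul] <;> nlinarith
  · rintro x ⟨h0, h1, h2⟩
    have hx : x = ∑ i, (![1 + x 0 + x 1, -x 0, -x 1] i) • (![0, ![-1, 0], ![0, -1]] i) := by
      funext j
      fin_cases j <;> simp [Fin.sum_univ_three, Matrix.vecHead, Matrix.vecTail] <;> try ring
    rw [hx]
    apply memHullCombo
    · intro i; fin_cases i <;> simp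
    · intro i; fin_cases i <;> simp <;> linarith
    · simp [Fin.sum_univ_three]
      try ring

private lemma latT : IsLatticePolytope 2 (convexHull ℝ ({0, ![1, 0], ![0, 1]} : Set (Vec 2))) := by
  classical
  refine ⟨{0, ![1, 0], ![0, 1]}, ?_, ?_⟩
  · intro x hx i
    simp only [Finset.mem_insert, Finset.mem_singleton] at hx
    rcases hx with rfl | rfl | rfl <;> fin_cases i <;>
      first
      | (refine ⟨0, ?_⟩; norm_num; done)
      | (refine ⟨1, ?_⟩; norm_num; done)
  · simp

private lemma latT' : IsLatticePolytope 2
    (convexHull ℝ ({![1, 0], ![0, 1], ![1, 1]} : Set (Vec 2))) := by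
  classical
  refine ⟨{![1, 0], ![0, 1], ![1, 1]}, ?_, ?_⟩
  · intro x hx i
    simp only [Finset.mem_insert, Finset.mem_singleton] at hx
    rcases hx with rfl | rfl | rfl <;> fin_cases i <;>
      first
      | (refine ⟨0, ?_⟩; norm_num; done)
      | (refine ⟨1, ?_⟩; norm_num; done)
  · simp

private lemma latS : IsLatticePolytope 2
    (convexHull ℝ ({0, ![1, 0], ![0, 1], ![1, 1]} : Set (Vec 2))) := by
  classical
  refine ⟨{0, ![1, 0], ![0, 1], ![1, 1]}, ?_, ?_⟩
  · intro x hx i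
    simp only [Finset.mem_insert, Finset.mem_singleton] at hx
    rcases hx with rfl | rfl | rfl | rfl <;> fin_cases i <;>
      first
      | (refine ⟨0, ?_⟩; norm_num; done)
      | (refine ⟨1, ?_⟩; norm_num; done)
  · simp

private lemma latD : IsLatticePolytope 2
    (convexHull ℝ ({![1, 0], ![0, 1]} : Set (Vec 2))) := by
  classical
  refine ⟨{![1, 0], ![0, 1]}, ?_, ?_⟩
  · intro x hx i
    simp only [Finset.mem_insert, Finset.mem_singleton] at hx
    rcases hx with rfl | rfl <;> fin_cases i <;>
      first
      | (refine ⟨0, ?_⟩; norm_num; done)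
      | (refine ⟨1, ?_⟩; norm_num; done)
  · simp

private lemma latN : IsLatticePolytope 2
    (convexHull ℝ ({0, ![-1, 0], ![0, -1]} : Set (Vec 2))) := by
  classical
  refine ⟨{0, ![-1, 0], ![0, -1]}, ?_, ?_⟩
  · intro x hx i
    simp only [Finset.mem_insert, Finset.mem_singleton] at hx
    rcases hx with rfl | rfl | rfl <;> fin_cases i <;>
      first
      | (refine ⟨0, ?_⟩; norm_num; done)
      | (refine ⟨-1, ?_⟩; norm_num; done)
  · simp

/-- The element `-I ∈ SL₂(ℤ)`. -/
private def negSL : Matrix.SpecialLinearGroup (Fin 2) ℤ :=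
  ⟨!![-1, 0; 0, -1], by norm_num [Matrix.det_fin_two_of]⟩

private lemma slAct_negSL (x : Vec 2) : slAct 2 negSL x = -x := by
  funext i
  fin_cases i <;>
    simp [slAct, negSL, Matrix.mulVec, dotProduct, Fin.sum_univ_two, Matrix.map_apply]

private lemma slActT_negSL (x : Vec 2) : slActT 2 negSL x = -x := by
  funext i
  fin_cases i <;>
    simp [slActT, negSL, Matrix.mulVec, dotProduct, Fin.sum_univ_two, Matrix.map_apply,
      Matrix.transpose_apply]

private lemma neg_e1 : -(![1, 0] : Vec 2) = ![-1, 0] := by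
  funext i; fin_cases i <;> norm_num

private lemma neg_e2 : -(![0, 1] : Vec 2) = ![0, -1] := by
  funext i; fin_cases i <;> norm_num

/-- Lemma 29: a simple, `SL_2(ℤ)` equivariant, translation invariant
valuation of even rank `r > 1` vanishing on the unit square vanishes on `T₂`. -/
theorem even_rank_simple_planar (r : ℕ) (hr : 1 < r) (hre : Even r)
    (Z : Set (Vec 2) → SymTensor 2 r)
    (hval : IsValuation 2 Z) (hequiv : SLEquivariant 2 r Z)
    (htrans : TranslationInvariant 2 Z)
    (hsimple : ∀ P : Set (Vec 2), IsLatticePolytope 2 P → pdim 2 P < 2 → Z P = 0)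
    (hsq : Z (convexHull ℝ ({0, ![1, 0], ![0, 1], ![1, 1]} : Set (Vec 2))) = 0) :
    Z (convexHull ℝ ({0, ![1, 0], ![0, 1]} : Set (Vec 2))) = 0 := by
  obtain ⟨hZ0, hadd⟩ := hval
  set T : Set (Vec 2) := convexHull ℝ ({0, ![1, 0], ![0, 1]} : Set (Vec 2)) with hTdef
  set T' : Set (Vec 2) := convexHull ℝ ({![1, 0], ![0, 1], ![1, 1]} : Set (Vec 2)) with hT'def
  set S : Set (Vec 2) := convexHull ℝ ({0, ![1, 0], ![0, 1], ![1, 1]} : Set (Vec 2)) with hSdef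
  set D : Set (Vec 2) := convexHull ℝ ({![1, 0], ![0, 1]} : Set (Vec 2)) with hDdef
  -- union and intersection
  have hunion : T ∪ T' = S := by
    rw [hTdef, hT'def, hSdef, hullT, hullT', hullS]
    ext x
    simp only [Set.mem_union, Set.mem_setOf_eq]
    constructor
    · rintro (⟨h0, h1, h2⟩ | ⟨h0, h1, h2⟩) <;> refine ⟨?_, ?_, ?_, ?_⟩ <;> linarith
    · rintro ⟨h0, h1, h2, h3⟩
      rcases le_or_gt (x 0 + x 1) 1 with h | h
      · exact Or.inl ⟨h0, h2, h⟩
      · exact Or.inr ⟨h1, h3, h.le⟩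
  have hinter : T ∩ T' = D := by
    rw [hTdef, hT'def, hDdef, hullT, hullT', hullD]
    ext x
    simp only [Set.mem_inter_iff, Set.mem_setOf_eq]
    constructor
    · rintro ⟨⟨h0, h1, h2⟩, h3, h4, h5⟩
      exact ⟨h0, h1, le_antisymm h2 h5⟩
    · rintro ⟨h0, h1, h2⟩
      exact ⟨⟨h0, h1, h2.le⟩, by linarith, by linarith, h2.ge⟩
  -- the diagonal is lower-dimensional
  have hZD : Z D = 0 := by
    apply hsimple D latD
    have hdim : pdim 2 D = Module.finrank ℝ (affineSpan ℝ D).direction := rfl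
    rw [hdim, hDdef, affineSpan_convexHull, direction_affineSpan, vectorSpan_pair]
    have hne : (![1, 0] : Vec 2) -ᵥ ![0, 1] ≠ 0 := by
      intro h
      have := congrFun h 0
      simp [vsub_eq_sub] at this
    rw [finrank_span_singleton hne]
    norm_num
  -- valuation identity
  have key : Z T + Z T' = Z (T ∪ T') + Z (T ∩ T') :=
    hadd T T' latT latT' (by rw [hunion]; exact latS) (by rw [hinter]; exact latD)
  rw [hunion, hinter, hZD, add_zero, hSdef, hsq] at key
  -- the image of T under -I
  have hactfun : slAct 2 negSL = fun x : Vec 2 => -x := funext slAct_negSL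
  have hneg : slAct 2 negSL '' T = convexHull ℝ ({0, ![-1, 0], ![0, -1]} : Set (Vec 2)) := by
    rw [hactfun, hTdef]
    have hlin : IsLinearMap ℝ (fun x : Vec 2 => -x) :=
      ⟨fun a b => by abel, fun c a => by simp⟩
    rw [hlin.image_convexHull]
    congr 1
    rw [Set.image_insert_eq, Set.image_insert_eq, Set.image_singleton, neg_zero, neg_e1, neg_e2]
  have hlatN : IsLatticePolytope 2 (slAct 2 negSL '' T) := by rw [hneg]; exact latN
  -- translating back gives T'
  have htr : latTranslate 2 1 (slAct 2 negSL '' T) = T' := by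
    rw [hneg, hT'def, hullN, hullT']
    ext x
    constructor
    · rintro ⟨z, ⟨h0, h1, h2⟩, rfl⟩
      refine ⟨?_, ?_, ?_⟩ <;> simp only [Pi.add_apply, Pi.one_apply, Int.cast_one] <;> linarith
    · rintro ⟨h0, h1, h2⟩
      refine ⟨fun i => x i - 1, ⟨by simpa using h0, by simpa using h1, by simp; linarith⟩, ?_⟩
      funext i
      simp
  -- equivariance gives Z(-T) = Z(T) since r is even
  have hZneg : Z (slAct 2 negSL '' T) = Z T := by
    apply Subtype.ext
    apply MultilinearMap.ext
    intro v
    have h := hequiv negSL T latT v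
    rw [h]
    have hv : (fun k => slActT 2 negSL (v k)) = fun k => (-1 : ℝ) • v k := by
      funext k
      rw [slActT_negSL]
      simp
    rw [hv, MultilinearMap.map_smul_univ]
    simp [Finset.prod_const, hre.neg_one_pow]
  have hZT' : Z T' = Z T := by
    have h := htrans 1 (slAct 2 negSL '' T) hlatN
    rw [htr] at h
    rw [h, hZneg]
  rw [hZT'] at key
  -- conclude
  have h2 : (2 : ℝ) • Z T = 0 := by rw [two_smul]; exact key
  calc Z T = (2 : ℝ)⁻¹ • ((2 : ℝ) • Z T) := by rw [smul_smul]; norm_num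
    _ = 0 := by rw [h2, smul_zero]

end
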